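/- Let p be a prime and t a positive integer not divisible by p. If lim_{N→∞} (1/N) ∑_{t|n, n≤N} φ(n)/n = L, then lim_{N→∞} (1/N) ∑_{pt|n, n≤N} φ(n)/n = L/(p+1). -/

import Mathlib

/-!
Writing a multiple of `p * t` as `p * m`, the identity `φ(pm)/(pm) = φ(m)/m` for `p ∣ m` and
`(1 - 1/p) φ(m)/m` otherwise gives `S_{pt}(N) = (1 - 1/p) S_t(⌊N/p⌋) + (1/p) S_{pt}(⌊N/p⌋)`,
where `S_t(N) = ∑_{t ∣ n ≤ N} φ(n)/n`.
Dividing by `N`, the error `e(N) = S_{pt}(N)/N - L/(p+1)` satisfies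
`e(N) = e(⌊N/p⌋)/p² + o(1)` (`L/(p+1)` is the fixed point of `x ↦ (1 - 1/p) L/p + x/p²`),
and a bounded sequence with this contraction property tends to `0`.
-/

open Filter Topology

theorem tendsto_zero_of_tendsto_sub_mul_comp_div {e : ℕ → ℝ} {c : ℝ} {m : ℕ} (hm : 0 < m)
    (hc : |c| < 1) (he : ∃ B, ∀ N, |e N| ≤ B)
    (h : Tendsto (fun N => e N - c * e (N / m)) atTop (𝓝 0)) :
    Tendsto e atTop (𝓝 0) := by
  obtain ⟨B, hB⟩ := he
  rw [Metric.tendsto_atTop]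
  intro ε hε
  obtain ⟨k, hk⟩ : ∃ k, |c| ^ k * B < ε / 2 := by
    have := (tendsto_pow_atTop_nhds_zero_of_lt_one (abs_nonneg c) hc).mul_const B
    rw [zero_mul] at this
    exact (this.eventually (gt_mem_nhds (half_pos hε))).exists
  obtain ⟨N₀, hN₀⟩ := Metric.tendsto_atTop.1 h ((1 - |c|) * (ε / 2))
    (mul_pos (sub_pos.2 hc) (half_pos hε))
  have hbound : ∀ j N, N₀ * m ^ j ≤ N → |e N| ≤ |c| ^ j * B + ε / 2 := by
    intro j
    induction j with
    | zero => intro N _; linarith [hB N]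
    | succ j ih =>
      intro N hN
      have hN₀N : N₀ ≤ N := (Nat.le_mul_of_pos_right _ (pow_pos hm _)).trans hN
      have hNm : N₀ * m ^ j ≤ N / m := by
        rw [Nat.le_div_iff_mul_le hm, mul_assoc, ← pow_succ]
        exact hN
      have hstep : |e N - c * e (N / m)| < (1 - |c|) * (ε / 2) := by
        simpa [Real.dist_eq] using hN₀ N hN₀N
      calc |e N| = |c * e (N / m) + (e N - c * e (N / m))| := by ring_nf
        _ ≤ |c| * |e (N / m)| + |e N - c * e (N / m)| := by
          rw [← abs_mul]; exact abs_add_le _ _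
        _ ≤ |c| * (|c| ^ j * B + ε / 2) + (1 - |c|) * (ε / 2) := by
          gcongr
          exact ih _ hNm
        _ = |c| ^ (j + 1) * B + ε / 2 := by ring
  refine ⟨N₀ * m ^ k, fun N hN => ?_⟩
  rw [Real.dist_eq, sub_zero]
  linarith [hbound k N hN]

theorem tendsto_natCast_div_div_atTop {m : ℕ} (hm : 0 < m) :
    Tendsto (fun N : ℕ => ((N / m : ℕ) : ℝ) / N) atTop (𝓝 (1 / m)) := by
  have hmR : (0 : ℝ) < m := Nat.cast_pos.2 hm
  have hfloor := (tendsto_nat_floor_div_atTop (R := ℝ)).comp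
    (tendsto_natCast_atTop_atTop.atTop_div_const hmR)
  convert hfloor.mul_const (1 / (m : ℝ)) using 2 with N
  · simp only [Function.comp_apply, ← Nat.floor_div_eq_div (K := ℝ)]
    field_simp
  · rw [one_mul]

theorem tendsto_div_comp_div_sub {f : ℕ → ℝ} {m : ℕ} (hm : 0 < m)
    (hf : IsBoundedUnder (· ≤ ·) atTop fun N => ‖f N / N‖) :
    Tendsto (fun N : ℕ => f (N / m) / N - f (N / m) / (N / m : ℕ) / m) atTop (𝓝 0) := by
  have hdiv : Tendsto (· / m) atTop atTop := Nat.tendsto_div_const_atTop hm.ne'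
  have hratio : Tendsto (fun N : ℕ => ((N / m : ℕ) : ℝ) / N - 1 / m) atTop (𝓝 0) := by
    simpa using (tendsto_natCast_div_div_atTop hm).sub_const (1 / (m : ℝ))
  have hbdd : IsBoundedUnder (· ≤ ·) atTop
      (norm ∘ fun N : ℕ => f (N / m) / (N / m : ℕ)) := hdiv.isBoundedUnder_comp hf
  refine (isBoundedUnder_le_mul_tendsto_zero hbdd hratio).congr' ?_
  filter_upwards [hdiv.eventually_ne_atTop 0] with N hN
  have : ((N / m : ℕ) : ℝ) ≠ 0 := Nat.cast_ne_zero.2 hN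
  field_simp

theorem tendsto_comp_div_div {f : ℕ → ℝ} {L : ℝ} {m : ℕ} (hm : 0 < m)
    (hf : Tendsto (fun N => f N / N) atTop (𝓝 L)) :
    Tendsto (fun N : ℕ => f (N / m) / N) atTop (𝓝 (L / m)) := by
  have hmain := ((hf.comp (Nat.tendsto_div_const_atTop hm.ne')).div_const (m : ℝ)).add
    (tendsto_div_comp_div_sub hm hf.norm.isBoundedUnder_le)
  simpa using hmain

theorem Finset.sum_Icc_filter_mul_dvd {M : Type*} [AddCommMonoid M] (f : ℕ → M) {k : ℕ}
    (hk : 0 < k) (t N : ℕ) :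
    ∑ n ∈ (Icc 1 N).filter (k * t ∣ ·), f n =
      ∑ m ∈ (Icc 1 (N / k)).filter (t ∣ ·), f (k * m) := by
  symm
  refine sum_nbij' (k * ·) (· / k) ?_ ?_ ?_ ?_ ?_
  · intro m hm
    simp only [mem_filter, mem_Icc] at hm ⊢
    refine ⟨⟨Nat.mul_pos hk hm.1.1, ?_⟩, mul_dvd_mul_left k hm.2⟩
    rw [mul_comm]
    exact (Nat.le_div_iff_mul_le hk).1 hm.1.2
  · intro n hn
    simp only [mem_filter, mem_Icc] at hn ⊢
    obtain ⟨⟨h1, h2⟩, ⟨c, rfl⟩⟩ := hn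
    rw [mul_assoc] at h1 h2 ⊢
    rw [Nat.mul_div_cancel_left _ hk, Nat.le_div_iff_mul_le hk, mul_comm _ k]
    exact ⟨⟨Nat.pos_of_mul_pos_left h1, h2⟩, dvd_mul_right t c⟩
  · intro m _
    exact Nat.mul_div_cancel_left m hk
  · intro n hn
    simp only [mem_filter, mem_Icc] at hn
    exact Nat.mul_div_cancel' ((dvd_mul_right k t).trans hn.2)
  · intro m _
    rfl

theorem totient_prime_mul_div {p : ℕ} (hp : p.Prime) (m : ℕ) :
    (Nat.totient (p * m) : ℝ) / (p * m : ℕ) =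
      (1 - 1 / p) * ((Nat.totient m : ℝ) / m) +
        1 / p * (if p ∣ m then (Nat.totient m : ℝ) / m else 0) := by
  have hp0 : (p : ℝ) ≠ 0 := Nat.cast_ne_zero.2 hp.ne_zero
  rcases Nat.eq_zero_or_pos m with rfl | hm
  · simp
  have hm0 : (m : ℝ) ≠ 0 := Nat.cast_ne_zero.2 hm.ne'
  split_ifs with hpm
  · rw [Nat.totient_mul_of_prime_of_dvd hp hpm]
    push_cast
    field_simp
    ring
  · rw [Nat.totient_mul_of_prime_of_not_dvd hp hpm, Nat.cast_mul, Nat.cast_pred hp.pos]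
    push_cast
    field_simp
    ring

noncomputable def totientRatioSum (t N : ℕ) : ℝ :=
  ∑ n ∈ (Finset.Icc 1 N).filter (t ∣ ·), (Nat.totient n : ℝ) / n

theorem totientRatioSum_nonneg (t N : ℕ) : 0 ≤ totientRatioSum t N :=
  Finset.sum_nonneg fun _ _ => by positivity

theorem totientRatioSum_le (t N : ℕ) : totientRatioSum t N ≤ N :=
  calc totientRatioSum t N ≤ ∑ n ∈ Finset.Icc 1 N, (Nat.totient n : ℝ) / n :=
        Finset.sum_le_sum_of_subset_of_nonneg (Finset.filter_subset _ _)
          fun _ _ _ => by positivity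
    _ ≤ ∑ _n ∈ Finset.Icc 1 N, (1 : ℝ) :=
        Finset.sum_le_sum fun n _ =>
          div_le_one_of_le₀ (Nat.cast_le.2 (Nat.totient_le n)) (Nat.cast_nonneg n)
    _ = N := by simp

theorem abs_totientRatioSum_div_le_one (t N : ℕ) : |totientRatioSum t N / N| ≤ 1 := by
  rw [abs_of_nonneg (div_nonneg (totientRatioSum_nonneg t N) (Nat.cast_nonneg N))]
  exact div_le_one_of_le₀ (totientRatioSum_le t N) (Nat.cast_nonneg N)

theorem totientRatioSum_prime_mul {p t : ℕ} (hp : p.Prime) (hpt : ¬ p ∣ t) (N : ℕ) :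
    totientRatioSum (p * t) N =
      (1 - 1 / p) * totientRatioSum t (N / p) + 1 / p * totientRatioSum (p * t) (N / p) := by
  have hcop : p.Coprime t := (Nat.Prime.coprime_iff_not_dvd hp).2 hpt
  unfold totientRatioSum
  rw [Finset.sum_Icc_filter_mul_dvd _ hp.pos]
  simp_rw [totient_prime_mul_div hp]
  rw [Finset.sum_add_distrib, ← Finset.mul_sum, ← Finset.mul_sum, ← Finset.sum_filter,
    Finset.filter_filter]
  congr 3
  refine Finset.filter_congr fun m _ => ⟨fun ⟨htm, hpm⟩ => hcop.mul_dvd_of_dvd_of_dvd hpm htm,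
    fun h => ⟨(dvd_mul_left t p).trans h, (dvd_mul_right p t).trans h⟩⟩

theorem stmt11_general (p t : ℕ) (hp : p.Prime) (hpt : ¬ p ∣ t) (L : ℝ)
    (hL : Tendsto (fun N : ℕ =>
      (∑ n ∈ (Finset.Icc 1 N).filter (fun n => t ∣ n), (Nat.totient n : ℝ) / n) / N)
      atTop (𝓝 L)) :
    Tendsto (fun N : ℕ =>
      (∑ n ∈ (Finset.Icc 1 N).filter (fun n => p * t ∣ n), (Nat.totient n : ℝ) / n) / N)
      atTop (𝓝 (L / (p + 1))) := by
  change Tendsto (fun N : ℕ => totientRatioSum t N / N) atTop (𝓝 L) at hL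
  change Tendsto (fun N : ℕ => totientRatioSum (p * t) N / N) atTop (𝓝 (L / (p + 1)))
  have hp2 : (2 : ℝ) ≤ p := Nat.ofNat_le_cast.2 hp.two_le
  rw [← tendsto_sub_nhds_zero_iff]
  refine tendsto_zero_of_tendsto_sub_mul_comp_div (c := 1 / p ^ 2) hp.pos ?_ ?_ ?_
  · rw [abs_of_pos (by positivity), div_lt_one (by positivity)]
    nlinarith
  · exact ⟨1 + |L / (p + 1)|, fun N =>
      (abs_sub _ _).trans (add_le_add_left (abs_totientRatioSum_div_le_one _ _) _)⟩
  have hsum_t :=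
    ((tendsto_comp_div_div hp.pos hL).sub_const (L / p)).const_mul (1 - 1 / (p : ℝ))
  have hbdd : IsBoundedUnder (· ≤ ·) atTop fun N : ℕ => ‖totientRatioSum (p * t) N / N‖ :=
    isBoundedUnder_of ⟨1, fun N => abs_totientRatioSum_div_le_one _ N⟩
  have hsum_pt := (tendsto_div_comp_div_sub hp.pos hbdd).const_mul (1 / (p : ℝ))
  have hlimit : L / (p + 1) - 1 / p ^ 2 * (L / (p + 1)) = (1 - 1 / p) * (L / p) := by
    field_simp
    ring
  convert hsum_t.add hsum_pt using 2 with N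
  · rw [totientRatioSum_prime_mul hp hpt]
    linear_combination -hlimit
  · simp

theorem stmt11 (p t : ℕ) (hp : p.Prime) (ht : 0 < t) (hpt : ¬ p ∣ t) (L : ℝ)
    (hL : Tendsto (fun N : ℕ =>
      (∑ n ∈ (Finset.Icc 1 N).filter (fun n => t ∣ n), (Nat.totient n : ℝ) / n) / N)
      atTop (𝓝 L)) :
    Tendsto (fun N : ℕ =>
      (∑ n ∈ (Finset.Icc 1 N).filter (fun n => p * t ∣ n), (Nat.totient n : ℝ) / n) / N)
      atTop (𝓝 (L / (p + 1))) :=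
  stmt11_general p t hp hpt L hL
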